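/- arXiv:1902.02028 — 3 statements merged into one kernel-verified Lean document; each statement's English description precedes it below -/
import Mathlib

section
/- Assume N ≥ 2, m > 0 and that g satisfies (g1)–(g2). Let λ ∈ ℝ and let u ∈ H¹(ℝ^N) be a nonzero function of class C² with ∫_{ℝ^N} u² = m, ∫_{ℝ^N} G(u) finite, solving −Δu + λu = g(u) pointwise on ℝ^N and satisfying the Pohozaev identity P(u) = 0. Then λm = ∫_{ℝ^N}(−((N−2)/2) g(u)u + N G(u)) ≥ (N − ((N−2)/2)β) ∫_{ℝ^N} G(u) > 0; in particular λ > 0. -/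
open MeasureTheory Filter Set Topology

noncomputable section

/-- Euclidean space ℝ^N. -/
abbrev Euc (N : ℕ) := EuclideanSpace ℝ (Fin N)

/-- `u ∈ H¹(ℝ^N)`: continuously differentiable with `∫ |u|² < ∞` and `∫ |∇u|² < ∞`. -/
def memH1 {N : ℕ} (u : Euc N → ℝ) : Prop :=
  ContDiff ℝ 1 u ∧ Integrable (fun x => (u x) ^ 2) ∧
    Integrable (fun x => ‖gradient u x‖ ^ 2)

/-- `u` is radially symmetric. -/
def IsRadial {N : ℕ} (u : Euc N → ℝ) : Prop :=
  ∃ w : ℝ → ℝ, ∀ x, u x = w ‖x‖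

/-- The primitive `G(ξ) = ∫₀^ξ g(τ) dτ`. -/
def Gfun (g : ℝ → ℝ) (ξ : ℝ) : ℝ := ∫ τ in (0:ℝ)..ξ, g τ

/-- Conditions (g1)–(g2) with exponents α, β. -/
def SatisfiesG12 (N : ℕ) (g : ℝ → ℝ) (α β : ℝ) : Prop :=
  Continuous g ∧
  2 + 4 / (N : ℝ) < α ∧ α < β ∧
  (3 ≤ N → β < 2 * (N : ℝ) / ((N : ℝ) - 2)) ∧
  ∀ ξ : ℝ, ξ ≠ 0 →
    0 < α * Gfun g ξ ∧ α * Gfun g ξ ≤ g ξ * ξ ∧ g ξ * ξ ≤ β * Gfun g ξ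

/-- The Laplacian of `u : ℝ^N → ℝ`. -/
def lap {N : ℕ} (u : Euc N → ℝ) (x : Euc N) : ℝ :=
  ∑ i, fderiv ℝ (fun y => fderiv ℝ u y (EuclideanSpace.single i 1)) x
    (EuclideanSpace.single i 1)

/-- The functional `I(u) = (1/2)∫|∇u|² − ∫ G(u)`. -/
def Ifun (N : ℕ) (g : ℝ → ℝ) (u : Euc N → ℝ) : ℝ :=
  (1/2) * (∫ x, ‖gradient u x‖ ^ 2) - ∫ x, Gfun g (u x)

/-- The Pohozaev functional `P(u) = ∫|∇u|² − N ∫ ((1/2)g(u)u − G(u))`. -/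
def Pfun (N : ℕ) (g : ℝ → ℝ) (u : Euc N → ℝ) : ℝ :=
  (∫ x, ‖gradient u x‖ ^ 2) - N * ∫ x, ((1/2) * g (u x) * u x - Gfun g (u x))

/-- The scaling `u_t(x) = t^{N/2} u(tx)`. -/
def scaled {N : ℕ} (u : Euc N → ℝ) (t : ℝ) : Euc N → ℝ :=
  fun x => t ^ ((N : ℝ)/2) * u (t • x)

/-!
Multiplying `-Δu + λu = g(u)` by `u` and integrating by parts gives the Nehari identity
`∫|∇u|² + λm = ∫ g(u)u`. On the whole space the boundary terms are controlled by testing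
against `φ(x/n)` for a fixed bump function `φ`: its gradient is `O(1/n)` uniformly. Subtracting
the Pohozaev identity `∫|∇u|² = N ∫ (g(u)u/2 - G(u))` leaves
`λm = ∫ (-((N-2)/2) g(u)u + N G(u))`, and `g(ξ)ξ ≤ βG(ξ)` bounds this below by
`(N - (N-2)β/2) ∫ G(u)`, which is positive because `β < 2N/(N-2)` and `G(u) > 0` wherever
`u ≠ 0`.
-/

section Cutoff

open scoped ContDiff

variable {E : Type*} [NormedAddCommGroup E] [NormedSpace ℝ E] [FiniteDimensional ℝ E]

def unitBump : ContDiffBump (0 : E) := ⟨1, 2, one_pos, one_lt_two⟩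

def cutoff (n : ℕ) (x : E) : ℝ := (unitBump : ContDiffBump (0 : E)) (((n : ℝ) + 1)⁻¹ • x)

lemma contDiff_cutoff (n : ℕ) : ContDiff ℝ ∞ (cutoff n : E → ℝ) :=
  (unitBump (E := E)).contDiff.comp (contDiff_const_smul _)

lemma hasCompactSupport_cutoff (n : ℕ) : HasCompactSupport (cutoff n : E → ℝ) :=
  (unitBump (E := E)).hasCompactSupport.comp_smul (by positivity)

lemma norm_cutoff_le_one (n : ℕ) (x : E) : ‖cutoff n x‖ ≤ 1 := by
  rw [cutoff, Real.norm_of_nonneg (unitBump (E := E)).nonneg]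
  exact (unitBump (E := E)).le_one

lemma eventually_cutoff_eq_one (x : E) : ∀ᶠ n in atTop, cutoff n x = 1 := by
  filter_upwards [eventually_ge_atTop ⌈‖x‖⌉₊] with n hn
  refine (unitBump (E := E)).one_of_mem_closedBall (show _ ≤ (1 : ℝ) from ?_)
  have hpos : (0 : ℝ) < n + 1 := by positivity
  rw [dist_zero_right, norm_smul, norm_inv, Real.norm_of_nonneg hpos.le,
    inv_mul_le_iff₀ hpos, mul_one]
  linarith [(Nat.ceil_le.mp hn : ‖x‖ ≤ n)]

lemma exists_norm_fderiv_cutoff_le :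
    ∃ C, ∀ (n : ℕ) (x : E), ‖fderiv ℝ (cutoff n) x‖ ≤ C / ((n : ℝ) + 1) := by
  obtain ⟨C, hC⟩ := ((unitBump (E := E)).contDiff.continuous_fderiv one_ne_zero
    ).bounded_above_of_compact_support ((unitBump (E := E)).hasCompactSupport.fderiv ℝ)
  refine ⟨C, fun n x => ?_⟩
  have hpos : (0 : ℝ) < n + 1 := by positivity
  rw [show (cutoff n : E → ℝ) = fun x => unitBump (E := E) (((n : ℝ) + 1)⁻¹ • x) from
    rfl, fderiv_comp_smul, norm_smul, norm_inv, Real.norm_of_nonneg hpos.le, inv_mul_eq_div]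
  exact div_le_div_of_nonneg_right (hC _) hpos.le

variable [MeasurableSpace E] {μ : Measure E}

lemma tendsto_integral_cutoff_mul [BorelSpace E] {f : E → ℝ} (hf : Integrable f μ) :
    Tendsto (fun n => ∫ x, cutoff n x * f x ∂μ) atTop (𝓝 (∫ x, f x ∂μ)) := by
  refine tendsto_integral_of_dominated_convergence (fun x => ‖f x‖)
    (fun n => ((contDiff_cutoff n).continuous.aestronglyMeasurable).mul
      hf.aestronglyMeasurable) hf.norm (fun n => ae_of_all _ fun x => ?_) (ae_of_all _ fun x => ?_)
  · rw [norm_mul]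
    exact mul_le_of_le_one_left (norm_nonneg _) (norm_cutoff_le_one n x)
  · refine tendsto_const_nhds.congr' ?_
    filter_upwards [eventually_cutoff_eq_one x] with n hn
    rw [hn, one_mul]

lemma tendsto_integral_fderiv_cutoff_mul {f : E → ℝ} (hf : Integrable f μ) (v : E) :
    Tendsto (fun n => ∫ x, fderiv ℝ (cutoff n) x v * f x ∂μ) atTop (𝓝 0) := by
  obtain ⟨C, hC⟩ := exists_norm_fderiv_cutoff_le (E := E)
  have hbound : ∀ (n : ℕ) x,
      ‖fderiv ℝ (cutoff n) x v * f x‖ ≤ C * ‖v‖ / ((n : ℝ) + 1) * ‖f x‖ := by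
    intro n x
    rw [norm_mul, mul_div_right_comm]
    gcongr
    exact (fderiv ℝ (cutoff n) x).le_of_opNorm_le (hC n x) v
  refine squeeze_zero_norm (fun n => norm_integral_le_of_norm_le (hf.norm.const_mul _)
    (ae_of_all _ (hbound n))) ?_
  simp_rw [integral_const_mul, div_eq_mul_one_div (C * ‖v‖)]
  simpa using ((tendsto_one_div_add_atTop_nhds_zero_nat (𝕜 := ℝ)).const_mul
    (C * ‖v‖)).mul_const (∫ x, ‖f x‖ ∂μ)

theorem integral_sum_fderiv_eq_zero [BorelSpace E] [μ.IsAddHaarMeasure] {ι : Type*} [Fintype ι]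
    {F : ι → E → ℝ} {v : ι → E} (hF : ∀ i, ContDiff ℝ 1 (F i))
    (hFint : ∀ i, Integrable (F i) μ)
    (hdiv : Integrable (fun x => ∑ i, fderiv ℝ (F i) x (v i)) μ) :
    ∫ x, ∑ i, fderiv ℝ (F i) x (v i) ∂μ = 0 := by
  have hF' : ∀ i, Continuous fun x => fderiv ℝ (F i) x (v i) := fun i =>
    ((hF i).continuous_fderiv one_ne_zero).clm_apply continuous_const
  have hcutoff' : ∀ n i, Continuous fun x => fderiv ℝ (cutoff n : E → ℝ) x (v i) :=
    fun n i => ((contDiff_cutoff n).continuous_fderiv (by simp)).clm_apply continuous_const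
  have hcutoffF' : ∀ n i, Integrable (fun x => cutoff n x * fderiv ℝ (F i) x (v i)) μ :=
    fun n i => ((contDiff_cutoff n).continuous.mul (hF' i)).integrable_of_hasCompactSupport
      (hasCompactSupport_cutoff n).mul_right
  have hibp : ∀ n, ∫ x, cutoff n x * ∑ i, fderiv ℝ (F i) x (v i) ∂μ =
      -∑ i, ∫ x, fderiv ℝ (cutoff n) x (v i) * F i x ∂μ := by
    intro n
    simp_rw [Finset.mul_sum]
    rw [integral_finsetSum _ fun i _ => hcutoffF' n i, ← Finset.sum_neg_distrib]
    refine Finset.sum_congr rfl fun i _ =>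
      integral_mul_fderiv_eq_neg_fderiv_mul_of_integrable ?_ (hcutoffF' n i) ?_
        (fun x _ => (contDiff_cutoff n).differentiable (by simp) x)
        (fun x _ => (hF i).differentiable one_ne_zero x)
    · exact ((hcutoff' n i).mul (hF i).continuous).integrable_of_hasCompactSupport
        ((hasCompactSupport_cutoff n).fderiv_apply ℝ (v i)).mul_right
    · exact ((contDiff_cutoff n).continuous.mul (hF i).continuous).integrable_of_hasCompactSupport
        (hasCompactSupport_cutoff n).mul_right
  have hlim := (tendsto_finsetSum Finset.univ fun i _ =>
    tendsto_integral_fderiv_cutoff_mul (hFint i) (v i)).neg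
  simpa using tendsto_nhds_unique ((tendsto_integral_cutoff_mul hdiv).congr hibp) hlim

end Cutoff

section Green

variable {E : Type*} [NormedAddCommGroup E] [InnerProductSpace ℝ E]
  {ι : Type*} [Fintype ι] (b : OrthonormalBasis ι ℝ E)

lemma sum_sq_fderiv_apply_orthonormalBasis [CompleteSpace E] (u : E → ℝ) (x : E) :
    ∑ i, fderiv ℝ u x (b i) ^ 2 = ‖gradient u x‖ ^ 2 := by
  simp_rw [← inner_gradient_left]
  exact b.sum_sq_inner_left _

variable [FiniteDimensional ℝ E] [MeasurableSpace E] [BorelSpace E] {μ : Measure E}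
  [μ.IsAddHaarMeasure]

theorem integral_norm_gradient_sq_eq_neg_integral_mul_laplacian {u : E → ℝ}
    (hu : ContDiff ℝ 2 u) (hu2 : Integrable (fun x => u x ^ 2) μ)
    (hgrad : Integrable (fun x => ‖gradient u x‖ ^ 2) μ)
    (hlap : Integrable
      (fun x => u x * ∑ i, fderiv ℝ (fun y => fderiv ℝ u y (b i)) x (b i)) μ) :
    ∫ x, ‖gradient u x‖ ^ 2 ∂μ =
      -∫ x, u x * ∑ i, fderiv ℝ (fun y => fderiv ℝ u y (b i)) x (b i) ∂μ := by
  have hu' : ∀ i, ContDiff ℝ 1 fun y => fderiv ℝ u y (b i) := fun i =>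
    (hu.fderiv_right le_rfl).clm_apply contDiff_const
  have hF : ∀ i, ContDiff ℝ 1 fun y => u y * fderiv ℝ u y (b i) := fun i =>
    (hu.of_le one_le_two).mul (hu' i)
  have hdiv : ∀ x, ∑ i, fderiv ℝ (fun y => u y * fderiv ℝ u y (b i)) x (b i) =
      ‖gradient u x‖ ^ 2 + u x * ∑ i, fderiv ℝ (fun y => fderiv ℝ u y (b i)) x (b i) := by
    intro x
    rw [← sum_sq_fderiv_apply_orthonormalBasis b, Finset.mul_sum, ← Finset.sum_add_distrib]
    refine Finset.sum_congr rfl fun i _ => ?_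
    rw [fderiv_fun_mul (hu.differentiable two_ne_zero x)
      ((hu' i).differentiable one_ne_zero x)]
    simp only [add_apply, smul_apply, smul_eq_mul]
    ring
  have hFint : ∀ i, Integrable (fun y => u y * fderiv ℝ u y (b i)) μ := by
    intro i
    refine (hu2.add hgrad).mono' (hF i).continuous.aestronglyMeasurable (ae_of_all _ fun y => ?_)
    have hle : |fderiv ℝ u y (b i)| ≤ ‖gradient u y‖ := by
      simpa [← inner_gradient_left] using abs_real_inner_le_norm (gradient u y) (b i)
    rw [Real.norm_eq_abs, abs_mul, Pi.add_apply]
    nlinarith [mul_le_mul_of_nonneg_left hle (abs_nonneg (u y)), sq_abs (u y),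
      sq_nonneg (|u y| - ‖gradient u y‖)]
  have hzero := integral_sum_fderiv_eq_zero hF hFint
    ((hgrad.add hlap).congr (ae_of_all _ fun x => (hdiv x).symm))
  simp_rw [hdiv] at hzero
  rw [integral_add hgrad hlap] at hzero
  linarith

end Green

theorem integral_norm_gradient_sq_eq_neg_integral_mul_lap {N : ℕ} {u : Euc N → ℝ}
    (hu : ContDiff ℝ 2 u) (hu2 : Integrable (fun x => u x ^ 2))
    (hgrad : Integrable (fun x => ‖gradient u x‖ ^ 2))
    (hlap : Integrable (fun x => u x * lap u x)) :
    ∫ x, ‖gradient u x‖ ^ 2 = -∫ x, u x * lap u x := by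
  simpa [lap, EuclideanSpace.basisFun_apply] using
    integral_norm_gradient_sq_eq_neg_integral_mul_laplacian (EuclideanSpace.basisFun (Fin N) ℝ)
      hu hu2 hgrad (by simpa [lap, EuclideanSpace.basisFun_apply] using hlap)

theorem nehari_identity {N : ℕ} {g : ℝ → ℝ} {lam : ℝ} {u : Euc N → ℝ}
    (hu : ContDiff ℝ 2 u) (hu2 : Integrable (fun x => u x ^ 2))
    (hgrad : Integrable (fun x => ‖gradient u x‖ ^ 2))
    (hgu : Integrable (fun x => g (u x) * u x))
    (heq : ∀ x, - lap u x + lam * u x = g (u x)) :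
    (∫ x, ‖gradient u x‖ ^ 2) + lam * ∫ x, u x ^ 2 = ∫ x, g (u x) * u x := by
  have hlap : ∀ x, u x * lap u x = lam * u x ^ 2 - g (u x) * u x := fun x => by
    linear_combination (-u x) * heq x
  have hlapint := ((hu2.const_mul lam).sub hgu).congr (ae_of_all _ fun x => (hlap x).symm)
  rw [integral_norm_gradient_sq_eq_neg_integral_mul_lap hu hu2 hgrad hlapint,
    integral_congr_ae (ae_of_all _ hlap), integral_sub (hu2.const_mul lam) hgu,
    integral_const_mul]
  ring

lemma Pfun_eq {N : ℕ} {g : ℝ → ℝ} {u : Euc N → ℝ}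
    (hgu : Integrable (fun x => g (u x) * u x)) (hGint : Integrable (fun x => Gfun g (u x))) :
    Pfun N g u = (∫ x, ‖gradient u x‖ ^ 2) -
      N * ((1 / 2) * (∫ x, g (u x) * u x) - ∫ x, Gfun g (u x)) := by
  rw [Pfun, integral_sub (by simpa [mul_assoc] using hgu.const_mul (1 / 2)) hGint,
    ← integral_const_mul]
  simp only [mul_assoc]

lemma continuous_Gfun {g : ℝ → ℝ} (hg : Continuous g) : Continuous (Gfun g) :=
  intervalIntegral.continuous_primitive (fun _ _ => hg.intervalIntegrable _ _) 0

namespace SatisfiesG12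

variable {N : ℕ} {g : ℝ → ℝ} {α β : ℝ} (hg : SatisfiesG12 N g α β)
include hg

lemma Gfun_pos {ξ : ℝ} (hξ : ξ ≠ 0) : 0 < Gfun g ξ := by
  have hα : 0 ≤ α := by
    have : (0 : ℝ) ≤ 4 / N := by positivity
    linarith [hg.2.1]
  exact pos_of_mul_pos_right (hg.2.2.2.2 ξ hξ).1 hα

lemma Gfun_nonneg (ξ : ℝ) : 0 ≤ Gfun g ξ := by
  rcases eq_or_ne ξ 0 with rfl | hξ
  · simp [Gfun]
  · exact (hg.Gfun_pos hξ).le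

lemma apply_mul_self_nonneg (ξ : ℝ) : 0 ≤ g ξ * ξ := by
  rcases eq_or_ne ξ 0 with rfl | hξ
  · simp
  · exact (hg.2.2.2.2 ξ hξ).1.le.trans (hg.2.2.2.2 ξ hξ).2.1

lemma apply_mul_self_le (ξ : ℝ) : g ξ * ξ ≤ β * Gfun g ξ := by
  rcases eq_or_ne ξ 0 with rfl | hξ
  · simp [Gfun]
  · exact (hg.2.2.2.2 ξ hξ).2.2

lemma pohozaev_coeff_pos (hN : 2 ≤ N) : 0 < (N : ℝ) - ((N : ℝ) - 2) / 2 * β := by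
  rcases hN.eq_or_lt with rfl | hN3
  · norm_num
  · have hN3 : (3 : ℝ) ≤ N := by exact_mod_cast hN3
    have hβ := hg.2.2.2.1 (by exact_mod_cast hN3)
    rw [lt_div_iff₀ (by linarith)] at hβ
    nlinarith

variable {X : Type*} [TopologicalSpace X] [MeasurableSpace X]
  {μ : Measure X} {u : X → ℝ}

lemma integrable_apply_comp_mul [OpensMeasurableSpace X] (hu : Continuous u)
    (hGint : Integrable (fun x => Gfun g (u x)) μ) : Integrable (fun x => g (u x) * u x) μ :=
  (hGint.const_mul β).mono' ((hg.1.comp hu).mul hu).aestronglyMeasurable <|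
    ae_of_all _ fun x => by
      rw [Real.norm_of_nonneg (hg.apply_mul_self_nonneg _)]
      exact hg.apply_mul_self_le _

lemma integral_Gfun_comp_pos [μ.IsOpenPosMeasure] (hu : Continuous u) (hu0 : u ≠ 0)
    (hGint : Integrable (fun x => Gfun g (u x)) μ) : 0 < ∫ x, Gfun g (u x) ∂μ := by
  obtain ⟨x₀, hx₀⟩ := Function.ne_iff.mp hu0
  rw [integral_pos_iff_support_of_nonneg (fun x => hg.Gfun_nonneg (u x)) hGint]
  exact ((continuous_Gfun hg.1).comp hu).isOpen_support.measure_pos μ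
    ⟨x₀, (hg.Gfun_pos hx₀).ne'⟩

end SatisfiesG12

/-- sign of the Lagrange multiplier. -/
theorem statement_2 (N : ℕ) (hN : 2 ≤ N) (m : ℝ) (hm : 0 < m)
    (g : ℝ → ℝ) (α β : ℝ) (hg : SatisfiesG12 N g α β)
    (lam : ℝ) (u : Euc N → ℝ) (humem : memH1 u) (huC2 : ContDiff ℝ 2 u)
    (hune : u ≠ 0) (hmass : (∫ x, (u x) ^ 2) = m)
    (hGint : Integrable (fun x => Gfun g (u x)))
    (heq : ∀ x, - lap u x + lam * u x = g (u x))
    (hPoh : Pfun N g u = 0) :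
    lam * m = (∫ x, (-(((N : ℝ) - 2) / 2) * g (u x) * u x + (N : ℝ) * Gfun g (u x))) ∧
    ((N : ℝ) - (((N : ℝ) - 2) / 2) * β) * (∫ x, Gfun g (u x))
      ≤ (∫ x, (-(((N : ℝ) - 2) / 2) * g (u x) * u x + (N : ℝ) * Gfun g (u x))) ∧
    0 < ((N : ℝ) - (((N : ℝ) - 2) / 2) * β) * (∫ x, Gfun g (u x)) ∧
    0 < lam := by
  obtain ⟨-, hu2, hgrad⟩ := humem
  have hgu := hg.integrable_apply_comp_mul huC2.continuous hGint
  have hnehari := nehari_identity huC2 hu2 hgrad hgu heq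
  rw [hmass] at hnehari
  rw [Pfun_eq hgu hGint, sub_eq_zero] at hPoh
  have htarget : (∫ x, (-(((N : ℝ) - 2) / 2) * g (u x) * u x + (N : ℝ) * Gfun g (u x))) =
      -(((N : ℝ) - 2) / 2) * (∫ x, g (u x) * u x) + N * ∫ x, Gfun g (u x) := by
    rw [integral_add (by simpa [mul_assoc] using hgu.const_mul _) (hGint.const_mul _)]
    simp [mul_assoc, integral_const_mul, integral_neg]
  have hle : (∫ x, g (u x) * u x) ≤ β * ∫ x, Gfun g (u x) := by
    rw [← integral_const_mul]
    exact integral_mono hgu (hGint.const_mul β) fun x => hg.apply_mul_self_le (u x)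
  have hpos := mul_pos (hg.pohozaev_coeff_pos hN)
    (hg.integral_Gfun_comp_pos huC2.continuous hune hGint)
  have hN2 : (2 : ℝ) ≤ N := by exact_mod_cast hN
  rw [htarget]
  set I := ∫ x, g (u x) * u x
  set J := ∫ x, Gfun g (u x)
  have hlam : lam * m = -(((N : ℝ) - 2) / 2) * I + N * J := by
    linear_combination hnehari - hPoh
  have hlower :
      ((N : ℝ) - ((N : ℝ) - 2) / 2 * β) * J ≤ -(((N : ℝ) - 2) / 2) * I + N * J := by
    nlinarith
  exact ⟨hlam, hlower, hpos, pos_of_mul_pos_left (hlam ▸ hpos.trans_le hlower) hm.le⟩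
end
end

section
/- Assume N ≥ 2, m > 0 and that g satisfies (g1)–(g2), and let c > 0. Suppose (u_j) ⊂ S_m satisfies I(u_j) → c and P(u_j) → 0 as j → ∞. Then sup_j ∫_{ℝ^N}|∇u_j|² < ∞, and moreover liminf_j ∫_{ℝ^N} G(u_j) ≥ c / (Nβ/4 − 1 − N/2) > 0 and limsup_j ∫_{ℝ^N} G(u_j) ≤ c / (Nα/4 − 1 − N/2). -/
/-!
Subtracting half the Pohozaev functional from the energy cancels the gradient term:
`I(u) - P(u)/2 = (N/2) ∫ ((1/2) g(u)u - G(u)) - ∫ G(u)`. By the Ambrosetti–Rabinowitz bounds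
`(α/2 - 1) G ≤ (1/2) g(ξ)ξ - G ≤ (β/2 - 1) G`, this quantity lies between `κ_α ∫ G(u)` and
`κ_β ∫ G(u)`, where `κ_γ = Nγ/4 - 1 - N/2 > 0`. Along the sequence it tends to `c`, which gives the
bounds on `∫ G(u_j)`; the gradient bound then follows from `∫ |∇u_j|² = 2 I(u_j) + 2 ∫ G(u_j)`.
-/

open MeasureTheory Filter Set Topology

noncomputable section

namespace SatisfiesG12

variable {N : ℕ} {g : ℝ → ℝ} {α β : ℝ}

lemma two_lt_left (hg : SatisfiesG12 N g α β) : 2 < α := by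
  linarith [hg.2.1, show (0 : ℝ) ≤ 4 / N by positivity]

lemma pohozaev_constants_pos (hN : 0 < N) (hg : SatisfiesG12 N g α β) :
    0 < (N : ℝ) * α / 4 - 1 - (N : ℝ) / 2 ∧ 0 < (N : ℝ) * β / 4 - 1 - (N : ℝ) / 2 := by
  obtain ⟨-, hα, hαβ, -⟩ := hg
  have hN0 : (0 : ℝ) < N := by positivity
  have hαN : 0 < (N : ℝ) * α / 4 - 1 - (N : ℝ) / 2 := by
    have h := mul_lt_mul_of_pos_right hα hN0
    rw [add_mul, div_mul_cancel₀ _ hN0.ne'] at h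
    linarith
  exact ⟨hαN, by nlinarith⟩

lemma Gfun_bounds (hg : SatisfiesG12 N g α β) (ξ : ℝ) :
    0 ≤ Gfun g ξ ∧ (α / 2 - 1) * Gfun g ξ ≤ 1 / 2 * g ξ * ξ - Gfun g ξ ∧
      1 / 2 * g ξ * ξ - Gfun g ξ ≤ (β / 2 - 1) * Gfun g ξ := by
  rcases eq_or_ne ξ 0 with rfl | hξ
  · simp [Gfun]
  obtain ⟨hpos, hlo, hhi⟩ := hg.2.2.2.2 ξ hξ
  have hα0 : 0 ≤ α := by linarith [hg.two_lt_left]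
  exact ⟨(pos_of_mul_pos_right hpos hα0).le, by linarith, by linarith⟩

end SatisfiesG12

/-- `h` and `f` are integrable together, so this also holds when both integrals take the junk
value `0`. -/
lemma integral_le_mul_integral_sandwich {X : Type*} [MeasurableSpace X] {μ : Measure X}
    {f h : X → ℝ} {a b : ℝ} (hfm : AEStronglyMeasurable f μ) (hhm : AEStronglyMeasurable h μ)
    (ha : 0 < a) (hf : ∀ x, 0 ≤ f x) (hlo : ∀ x, a * f x ≤ h x) (hhi : ∀ x, h x ≤ b * f x) :
    a * ∫ x, f x ∂μ ≤ ∫ x, h x ∂μ ∧ ∫ x, h x ∂μ ≤ b * ∫ x, f x ∂μ := by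
  have hh : ∀ x, 0 ≤ h x := fun x => (mul_nonneg ha.le (hf x)).trans (hlo x)
  by_cases hfi : Integrable f μ
  · have hhi' : Integrable h μ := (hfi.const_mul b).mono' hhm <| .of_forall fun x => by
      rw [Real.norm_of_nonneg (hh x)]; exact hhi x
    rw [← integral_const_mul, ← integral_const_mul]
    exact ⟨integral_mono (hfi.const_mul a) hhi' hlo, integral_mono hhi' (hfi.const_mul b) hhi⟩
  · have hhni : ¬ Integrable h μ := fun hhi' => hfi <|
      (hhi'.const_mul a⁻¹).mono' hfm <| .of_forall fun x => by
        rw [Real.norm_of_nonneg (hf x), le_inv_mul_iff₀ ha]; exact hlo x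
    simp [integral_undef hfi, integral_undef hhni]

lemma Ifun_sub_half_Pfun_eq (N : ℕ) (g : ℝ → ℝ) (u : Euc N → ℝ) :
    Ifun N g u - Pfun N g u / 2 =
      (N : ℝ) / 2 * (∫ x, (1 / 2 * g (u x) * u x - Gfun g (u x))) - ∫ x, Gfun g (u x) := by
  simp only [Ifun, Pfun]
  ring

lemma SatisfiesG12.Ifun_sub_half_Pfun_bounds {N : ℕ} {g : ℝ → ℝ} {α β : ℝ}
    (hg : SatisfiesG12 N g α β) {u : Euc N → ℝ} (hu : Continuous u) :
    0 ≤ ∫ x, Gfun g (u x) ∧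
      ((N : ℝ) * α / 4 - 1 - (N : ℝ) / 2) * ∫ x, Gfun g (u x) ≤ Ifun N g u - Pfun N g u / 2 ∧
      Ifun N g u - Pfun N g u / 2 ≤ ((N : ℝ) * β / 4 - 1 - (N : ℝ) / 2) * ∫ x, Gfun g (u x) := by
  have hGu : Continuous fun x => Gfun g (u x) := (continuous_Gfun hg.1).comp hu
  have hDu : Continuous fun x => 1 / 2 * g (u x) * u x - Gfun g (u x) :=
    ((continuous_const.mul (hg.1.comp hu)).mul hu).sub hGu
  have hα : 0 < α / 2 - 1 := by linarith [hg.two_lt_left]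
  obtain ⟨hlo, hhi⟩ := integral_le_mul_integral_sandwich (μ := volume)
    hGu.aestronglyMeasurable hDu.aestronglyMeasurable hα (fun x => (hg.Gfun_bounds (u x)).1)
    (fun x => (hg.Gfun_bounds (u x)).2.1) (fun x => (hg.Gfun_bounds (u x)).2.2)
  have hN0 : (0 : ℝ) ≤ N / 2 := by positivity
  rw [Ifun_sub_half_Pfun_eq]
  refine ⟨integral_nonneg fun x => (hg.Gfun_bounds (u x)).1, ?_, ?_⟩
  · nlinarith [mul_le_mul_of_nonneg_left hlo hN0]
  · nlinarith [mul_le_mul_of_nonneg_left hhi hN0]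

lemma bddAbove_liminf_limsup_of_tendsto_of_mul_le {B Q : ℕ → ℝ} {c a b : ℝ}
    (hQ : Tendsto Q atTop (𝓝 c)) (ha : 0 < a) (hb : 0 < b) (hB : ∀ j, 0 ≤ B j)
    (hlo : ∀ j, a * B j ≤ Q j) (hhi : ∀ j, Q j ≤ b * B j) :
    BddAbove (range B) ∧ c / b ≤ liminf B atTop ∧ limsup B atTop ≤ c / a := by
  have hBa : ∀ j, B j ≤ Q j / a := fun j => (le_div_iff₀' ha).2 (hlo j)
  have hBb : ∀ j, Q j / b ≤ B j := fun j => (div_le_iff₀' hb).2 (hhi j)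
  have hQa : Tendsto (fun j => Q j / a) atTop (𝓝 (c / a)) := hQ.div_const a
  have hQb : Tendsto (fun j => Q j / b) atTop (𝓝 (c / b)) := hQ.div_const b
  have hBbdd : IsBoundedUnder (· ≤ ·) atTop B :=
    hQa.isBoundedUnder_le.mono_le (.of_forall hBa)
  refine ⟨?_, ?_, ?_⟩
  · obtain ⟨M, hM⟩ := hQa.bddAbove_range
    exact ⟨M, forall_mem_range.2 fun j => (hBa j).trans (hM ⟨j, rfl⟩)⟩
  · calc c / b = liminf (fun j => Q j / b) atTop := hQb.liminf_eq.symm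
      _ ≤ liminf B atTop :=
        liminf_le_liminf (.of_forall hBb) hQb.isBoundedUnder_ge hBbdd.isCoboundedUnder_ge
  · calc limsup B atTop ≤ limsup (fun j => Q j / a) atTop :=
          limsup_le_limsup (.of_forall hBa)
            (isCoboundedUnder_le_of_eventually_le atTop (.of_forall hB)) hQa.isBoundedUnder_le
      _ = c / a := hQa.limsup_eq

theorem statement_7_general (N : ℕ) (hN : 2 ≤ N) (m : ℝ)
    (g : ℝ → ℝ) (α β : ℝ) (hg : SatisfiesG12 N g α β)
    (c : ℝ) (hc : 0 < c) (u : ℕ → Euc N → ℝ)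
    (hmem : ∀ j, memH1 (u j) ∧ (∫ x, (u j x) ^ 2) = m)
    (hI : Tendsto (fun j => Ifun N g (u j)) atTop (𝓝 c))
    (hP : Tendsto (fun j => Pfun N g (u j)) atTop (𝓝 0)) :
    (∃ C : ℝ, ∀ j, (∫ x, ‖gradient (u j) x‖ ^ 2) ≤ C) ∧
    c / ((N : ℝ) * β / 4 - 1 - (N : ℝ) / 2)
      ≤ Filter.liminf (fun j => ∫ x, Gfun g (u j x)) atTop ∧
    0 < c / ((N : ℝ) * β / 4 - 1 - (N : ℝ) / 2) ∧
    Filter.limsup (fun j => ∫ x, Gfun g (u j x)) atTop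
      ≤ c / ((N : ℝ) * α / 4 - 1 - (N : ℝ) / 2) := by
  obtain ⟨hκα, hκβ⟩ := hg.pohozaev_constants_pos (by omega)
  have hbounds j := hg.Ifun_sub_half_Pfun_bounds (hmem j).1.1.continuous
  have hQ : Tendsto (fun j => Ifun N g (u j) - Pfun N g (u j) / 2) atTop (𝓝 c) := by
    simpa using hI.sub (hP.div_const 2)
  obtain ⟨⟨MG, hMG⟩, hliminf, hlimsup⟩ := bddAbove_liminf_limsup_of_tendsto_of_mul_le hQ hκα hκβ
    (fun j => (hbounds j).1) (fun j => (hbounds j).2.1) (fun j => (hbounds j).2.2)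
  obtain ⟨MI, hMI⟩ := hI.bddAbove_range
  refine ⟨⟨2 * MI + 2 * MG, fun j => ?_⟩, hliminf, div_pos hc hκβ, hlimsup⟩
  have hIj : Ifun N g (u j) ≤ MI := hMI ⟨j, rfl⟩
  have hGj : ∫ x, Gfun g (u j x) ≤ MG := hMG ⟨j, rfl⟩
  simp only [Ifun] at hIj
  linarith

/-- boundedness of gradients and bounds on `∫ G(u_j)` along PSP-type sequences. -/
theorem statement_7 (N : ℕ) (hN : 2 ≤ N) (m : ℝ) (hm : 0 < m)
    (g : ℝ → ℝ) (α β : ℝ) (hg : SatisfiesG12 N g α β)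
    (c : ℝ) (hc : 0 < c) (u : ℕ → Euc N → ℝ)
    (hmem : ∀ j, memH1 (u j) ∧ (∫ x, (u j x) ^ 2) = m)
    (hI : Tendsto (fun j => Ifun N g (u j)) atTop (𝓝 c))
    (hP : Tendsto (fun j => Pfun N g (u j)) atTop (𝓝 0)) :
    (∃ C : ℝ, ∀ j, (∫ x, ‖gradient (u j) x‖ ^ 2) ≤ C) ∧
    c / ((N : ℝ) * β / 4 - 1 - (N : ℝ) / 2)
      ≤ Filter.liminf (fun j => ∫ x, Gfun g (u j x)) atTop ∧
    0 < c / ((N : ℝ) * β / 4 - 1 - (N : ℝ) / 2) ∧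
    Filter.limsup (fun j => ∫ x, Gfun g (u j x)) atTop
      ≤ c / ((N : ℝ) * α / 4 - 1 - (N : ℝ) / 2) :=
  statement_7_general N hN m g α β hg c hc u hmem hI hP
end
end

section
/- Let μ > 0 and β < 0. Suppose ψ ∈ H¹_r(ℝ³) is of class C¹ with |x|ψ(x) → 0 as |x| → ∞, and v ∈ H¹_r(ℝ³) is a nonzero function of class C² solving −Δv − βψ(x)²v = μ v₊³ pointwise on ℝ³ (the case λ = 0). Writing v(x) = w(|x|), the zero set {r ∈ (0,∞) : w(r) = 0} is finite. -/
open MeasureTheory Filter Set Topology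

noncomputable section

/-- Euclidean space ℝ³. -/
abbrev E3 := EuclideanSpace ℝ (Fin 3)

/-- `u ∈ H¹_r(ℝ³)`: continuously differentiable, radially symmetric,
with `∫ |u|² < ∞` and `∫ |∇u|² < ∞`. -/
def memH1r (u : E3 → ℝ) : Prop :=
  ContDiff ℝ 1 u ∧ (∃ w : ℝ → ℝ, ∀ x, u x = w ‖x‖) ∧
    Integrable (fun x => (u x) ^ 2) ∧ Integrable (fun x => ‖gradient u x‖ ^ 2)

/-- The Laplacian of `u : ℝ³ → ℝ`. -/
def lap3 (u : E3 → ℝ) (x : E3) : ℝ :=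
  ∑ i, fderiv ℝ (fun y => fderiv ℝ u y (EuclideanSpace.single i 1)) x
    (EuclideanSpace.single i 1)

/-- The coupling nonlinearity `G(u₁,u₂) = (μ₁/4)u₁₊⁴ + (μ₂/4)u₂₊⁴ + (β/2)u₁²u₂²`. -/
def Gsys (μ₁ μ₂ β : ℝ) (u₁ u₂ : E3 → ℝ) (x : E3) : ℝ :=
  μ₁ / 4 * (max (u₁ x) 0) ^ 4 + μ₂ / 4 * (max (u₂ x) 0) ^ 4
    + β / 2 * (u₁ x) ^ 2 * (u₂ x) ^ 2

/-- The functional `I_*(u₁,u₂)`. -/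
def Istar (μ₁ μ₂ β : ℝ) (u₁ u₂ : E3 → ℝ) : ℝ :=
  (1/2) * (∫ x, (‖gradient u₁ x‖ ^ 2 + ‖gradient u₂ x‖ ^ 2))
    - ∫ x, Gsys μ₁ μ₂ β u₁ u₂ x

/-- The Pohozaev functional `P_*(u₁,u₂)`. -/
def Pstar (μ₁ μ₂ β : ℝ) (u₁ u₂ : E3 → ℝ) : ℝ :=
  (∫ x, (‖gradient u₁ x‖ ^ 2 + ‖gradient u₂ x‖ ^ 2))
    - 3 * ∫ x, Gsys μ₁ μ₂ β u₁ u₂ x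

/-!
Write `v x = g ‖x‖`. On `(0, ∞)` the equation becomes `g'' + (2/r) g' = Ψ g - μ g₊³` with
`Ψ = -β ψ² ≥ 0`. Grönwall's inequality for `g² + g'²` shows that a double zero forces `g = 0`,
so, as `v ≠ 0`, every positive zero of `g` is simple. Where `g < 0` we have `(r g)'' = r Ψ g ≤ 0`,
so `g` cannot be negative between two zeros (`r g` would be concave, vanish at both ends and be
negative inside). Hence no zero follows a zero with `g' < 0` and none precedes a zero with
`g' > 0`, so `g` has at most two positive zeros.
-/

lemma exists_first_zero_of_eventually_neg {f : ℝ → ℝ} {a b : ℝ} (hf : ContinuousOn f (Icc a b))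
    (hab : a < b) (hb : 0 ≤ f b) (hneg : ∀ᶠ t in 𝓝[>] a, f t < 0) :
    ∃ q ∈ Ioc a b, f q = 0 ∧ ∀ t ∈ Ioo a q, f t < 0 := by
  obtain ⟨c, hac, hc⟩ := (mem_nhdsGT_iff_exists_Ioo_subset' hab).1 hneg
  set K := {t ∈ Icc c b | 0 ≤ f t}
  have hcb : c ≤ b := not_lt.1 fun hbc => (hc ⟨hab, hbc⟩ : f b < 0).not_ge hb
  have hK : IsCompact K := isCompact_Icc.of_isClosed_subset
    (isClosed_Icc.isClosed_le continuousOn_const (hf.mono (Icc_subset_Icc hac.le le_rfl)))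
    (fun t ht => ht.1)
  have hbK : b ∈ K := ⟨⟨hcb, le_rfl⟩, hb⟩
  have hqK : sInf K ∈ K := hK.sInf_mem ⟨b, hbK⟩
  have haq : a < sInf K := hac.trans_le hqK.1.1
  have hneg_before : ∀ t ∈ Ioo a (sInf K), f t < 0 := by
    intro t ht
    by_cases htc : t < c
    · exact hc ⟨ht.1, htc⟩
    · refine not_le.1 fun h0 => ht.2.not_ge (csInf_le hK.bddBelow ⟨⟨not_lt.1 htc, ?_⟩, h0⟩)
      exact ht.2.le.trans hqK.1.2
  have hq_nonpos : f (sInf K) ≤ 0 := by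
    refine le_on_closure (fun t ht => (hneg_before t ht).le) ?_ continuousOn_const
      (by rw [closure_Ioo haq.ne]; exact right_mem_Icc.2 haq.le)
    rw [closure_Ioo haq.ne]
    exact hf.mono (Icc_subset_Icc le_rfl hqK.1.2)
  exact ⟨sInf K, ⟨haq, hqK.1.2⟩, le_antisymm hq_nonpos hqK.2, hneg_before⟩

lemma exists_last_zero_of_eventually_neg {f : ℝ → ℝ} {a b : ℝ} (hf : ContinuousOn f (Icc a b))
    (hab : a < b) (ha : 0 ≤ f a) (hneg : ∀ᶠ t in 𝓝[<] b, f t < 0) :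
    ∃ p ∈ Ico a b, f p = 0 ∧ ∀ t ∈ Ioo p b, f t < 0 := by
  have hneg' : ∀ᶠ t in 𝓝[>] (-b), f (-t) < 0 := by
    obtain ⟨c, hcb, hc⟩ := mem_nhdsLT_iff_exists_Ioo_subset.1 hneg
    exact mem_nhdsGT_iff_exists_Ioo_subset.2
      ⟨-c, neg_lt_neg (mem_Iio.1 hcb), fun t ht => hc ⟨lt_neg.1 ht.2, neg_lt.1 ht.1⟩⟩
  obtain ⟨q, hq, hfq, hq_neg⟩ := exists_first_zero_of_eventually_neg (f := fun t => f (-t))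
    (hf.comp continuousOn_neg fun t ht => ⟨le_neg.1 ht.2, neg_le.1 ht.1⟩) (neg_lt_neg hab)
    (by simpa using ha) hneg'
  refine ⟨-q, ⟨le_neg.2 hq.2, neg_lt.1 hq.1⟩, hfq, fun t ht => ?_⟩
  simpa using hq_neg (-t) ⟨neg_lt_neg ht.2, neg_lt.1 ht.1⟩

lemma eq_zero_of_abs_deriv2_le_of_eq_zero_right {u u' u'' : ℝ → ℝ} {a b K : ℝ} (hK : 0 ≤ K)
    (hu : ∀ t ∈ Icc a b, HasDerivAt u (u' t) t) (hu' : ∀ t ∈ Icc a b, HasDerivAt u' (u'' t) t)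
    (hbound : ∀ t ∈ Icc a b, |u'' t| ≤ K * (|u t| + |u' t|)) (ha : u a = 0) (ha' : u' a = 0) :
    ∀ t ∈ Icc a b, u t = 0 := by
  set energy : ℝ → ℝ := fun t => u t ^ 2 + u' t ^ 2
  have henergy : ∀ t ∈ Icc a b,
      HasDerivAt energy (2 * u t * u' t + 2 * u' t * u'' t) t := fun t ht =>
    (((hu t ht).fun_pow 2).fun_add ((hu' t ht).fun_pow 2)).congr_deriv (by push_cast; ring)
  have henergy_bound : ∀ t ∈ Ico a b,
      ‖2 * u t * u' t + 2 * u' t * u'' t‖ ≤ (1 + 3 * K) * ‖energy t‖ := fun t ht => by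
    have h := hbound t (Ico_subset_Icc_self ht)
    rw [Real.norm_eq_abs, Real.norm_eq_abs, abs_of_nonneg (by positivity : 0 ≤ energy t)]
    calc |2 * u t * u' t + 2 * u' t * u'' t|
        ≤ 2 * |u t| * |u' t| + 2 * |u' t| * (K * (|u t| + |u' t|)) := by
          refine (abs_add_le _ _).trans (add_le_add (by simp [abs_mul]) ?_)
          rw [abs_mul, abs_mul, abs_two]
          gcongr
      _ ≤ (1 + 3 * K) * (u t ^ 2 + u' t ^ 2) := by
          rw [← sq_abs (u t), ← sq_abs (u' t)]
          nlinarith [sq_nonneg (|u t| - |u' t|), mul_nonneg hK (sq_nonneg (|u t| - |u' t|)),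
            mul_nonneg hK (sq_nonneg (u' t))]
  have hzero := eq_zero_of_abs_deriv_le_mul_abs_self_of_eq_zero_right
    (fun t ht => (henergy t ht).continuousAt.continuousWithinAt)
    (fun t ht => (henergy t (Ico_subset_Icc_self ht)).hasDerivWithinAt)
    (by simp [energy, ha, ha']) henergy_bound
  intro t ht
  have := hzero t ht
  simp only [energy] at this
  nlinarith [sq_nonneg (u t), sq_nonneg (u' t)]

lemma eq_zero_of_abs_deriv2_le {u u' u'' : ℝ → ℝ} {a b K r₀ : ℝ} (hK : 0 ≤ K)
    (hu : ∀ t ∈ Icc a b, HasDerivAt u (u' t) t) (hu' : ∀ t ∈ Icc a b, HasDerivAt u' (u'' t) t)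
    (hbound : ∀ t ∈ Icc a b, |u'' t| ≤ K * (|u t| + |u' t|)) (hr₀ : r₀ ∈ Icc a b)
    (h₀ : u r₀ = 0) (h₀' : u' r₀ = 0) : ∀ t ∈ Icc a b, u t = 0 := by
  intro t ht
  rcases le_total r₀ t with hr₀t | htr₀
  · exact eq_zero_of_abs_deriv2_le_of_eq_zero_right hK (fun s hs => hu s ⟨hr₀.1.trans hs.1, hs.2⟩)
      (fun s hs => hu' s ⟨hr₀.1.trans hs.1, hs.2⟩)
      (fun s hs => hbound s ⟨hr₀.1.trans hs.1, hs.2⟩) h₀ h₀' t ⟨hr₀t, ht.2⟩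
  · have hmem : ∀ s ∈ Icc (-r₀) (-a), -s ∈ Icc a b := fun s hs =>
      ⟨le_neg.1 hs.2, (neg_le.1 hs.1).trans hr₀.2⟩
    have := eq_zero_of_abs_deriv2_le_of_eq_zero_right (u := fun s => u (-s))
      (u' := fun s => -u' (-s)) (u'' := fun s => u'' (-s)) hK
      (fun s hs => by
        simpa [Function.comp_def] using (hu (-s) (hmem s hs)).comp s (hasDerivAt_neg s))
      (fun s hs => by
        simpa [Function.comp_def] using ((hu' (-s) (hmem s hs)).comp s (hasDerivAt_neg s)).fun_neg)
      (fun s hs => by simpa using hbound (-s) (hmem s hs)) (by simpa using h₀)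
      (by simpa using h₀') (-t) ⟨neg_le_neg htr₀, neg_le_neg ht.1⟩
    simpa using this

section LineDerivatives

variable {E F : Type*} [NormedAddCommGroup E] [NormedSpace ℝ E] [NormedAddCommGroup F]
  [NormedSpace ℝ F]

lemma hasDerivAt_comp_add_smul {f : E → F} {x u : E} {t : ℝ}
    (hf : DifferentiableAt ℝ f (x + t • u)) :
    HasDerivAt (fun s : ℝ => f (x + s • u)) (fderiv ℝ f (x + t • u) u) t :=
  hf.hasFDerivAt.comp_hasDerivAt t (by simpa using ((hasDerivAt_id t).smul_const u).const_add x)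

lemma fderiv_fderiv_apply_eq_of_hasDerivAt_line {f : E → F} (hf : ContDiff ℝ 2 f) {x u : E}
    {φ' : ℝ → F} {c : F} (hφ : ∀ s, HasDerivAt (fun s : ℝ => f (x + s • u)) (φ' s) s)
    (hφ' : HasDerivAt φ' c 0) : fderiv ℝ (fun y => fderiv ℝ f y u) x u = c := by
  have hφ'_eq : φ' = fun s => fderiv ℝ f (x + s • u) u :=
    funext fun s => (hφ s).unique (hasDerivAt_comp_add_smul (hf.differentiable two_ne_zero _))
  have hdiff : Differentiable ℝ (fun y => fderiv ℝ f y u) :=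
    ((hf.fderiv_right (m := 1) (by norm_num)).clm_apply contDiff_const).differentiable one_ne_zero
  subst hφ'_eq
  simpa using (hasDerivAt_comp_add_smul (x := x) (u := u) (t := 0) (hdiff _)).unique hφ'

end LineDerivatives

lemma hasDerivAt_sub_smul_of_continuousAt {𝕜 F : Type*} [NontriviallyNormedField 𝕜]
    [NormedAddCommGroup F] [NormedSpace 𝕜 F] {k : 𝕜 → F} {a : 𝕜} (hk : ContinuousAt k a) :
    HasDerivAt (fun s => (s - a) • k s) (k a) a := by
  rw [hasDerivAt_iff_tendsto_slope]
  refine (hk.tendsto.mono_left nhdsWithin_le_nhds).congr' ?_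
  filter_upwards [self_mem_nhdsWithin] with s hs
  rw [slope_def_module, sub_self, zero_smul, sub_zero, smul_smul,
    inv_mul_cancel₀ (sub_ne_zero.2 hs), one_smul]

lemma hasDerivAt_comp_sqrt_sq_add_sq {g g' : ℝ → ℝ} (hg : ∀ t, HasDerivAt g (g' t) t) {r : ℝ}
    (hr : r ≠ 0) (s : ℝ) :
    HasDerivAt (fun s => g √(r ^ 2 + s ^ 2)) (s * (g' √(r ^ 2 + s ^ 2) / √(r ^ 2 + s ^ 2))) s := by
  have hpos : 0 < r ^ 2 + s ^ 2 := by positivity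
  have hsqrt : HasDerivAt (fun s => √(r ^ 2 + s ^ 2)) (s / √(r ^ 2 + s ^ 2)) s := by
    have := ((hasDerivAt_pow 2 s).const_add (r ^ 2)).sqrt hpos.ne'
    convert this using 1
    field_simp
    norm_num [mul_comm]
  exact ((hg _).comp s hsqrt).congr_deriv (by ring)

lemma norm_smul_single_zero_add_smul_single (r s : ℝ) {i : Fin 3} (hi : i ≠ 0) :
    ‖(r • EuclideanSpace.single 0 1 + s • EuclideanSpace.single i 1 : E3)‖ = √(r ^ 2 + s ^ 2) := by
  rw [EuclideanSpace.norm_eq]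
  fin_cases i
  · exact absurd rfl hi
  all_goals simp [Fin.sum_univ_three]

def radialProfile (v : E3 → ℝ) (r : ℝ) : ℝ := v (r • EuclideanSpace.single 0 1)

theorem lap3_smul_single_zero {v : E3 → ℝ} (hv : ContDiff ℝ 2 v)
    (hrad : ∀ y, v y = radialProfile v ‖y‖) {r : ℝ} (hr : 0 < r) :
    lap3 v (r • EuclideanSpace.single 0 1)
      = deriv (deriv (radialProfile v)) r + 2 / r * deriv (radialProfile v) r := by
  set g := radialProfile v
  have hg : ContDiff ℝ 2 g := hv.comp (contDiff_id.smul contDiff_const)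
  have hg' : ∀ t, HasDerivAt g (deriv g t) t := fun t =>
    (hg.differentiable two_ne_zero t).hasDerivAt
  have hg'' : ∀ t, HasDerivAt (deriv g) (deriv (deriv g) t) t := fun t =>
    (hg.differentiable_deriv_two t).hasDerivAt
  have hradial : fderiv ℝ (fun y => fderiv ℝ v y (EuclideanSpace.single 0 1))
      (r • EuclideanSpace.single 0 1) (EuclideanSpace.single 0 1) = deriv (deriv g) r := by
    refine fderiv_fderiv_apply_eq_of_hasDerivAt_line hv (φ' := fun s => deriv g (r + s))
      (fun s => ?_) ((hg'' (r + 0)).comp_const_add r 0 |>.congr_deriv (by simp))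
    simpa only [g, radialProfile, add_smul] using (hg' (r + s)).comp_const_add r s
  have htangential : ∀ i : Fin 3, i ≠ 0 →
      fderiv ℝ (fun y => fderiv ℝ v y (EuclideanSpace.single i 1))
        (r • EuclideanSpace.single 0 1) (EuclideanSpace.single i 1) = deriv g r / r := by
    intro i hi
    have hdg : Continuous (deriv g) := hg.continuous_deriv one_le_two
    have hk : ContinuousAt (fun s => deriv g √(r ^ 2 + s ^ 2) / √(r ^ 2 + s ^ 2)) 0 := by
      refine ContinuousAt.div (by fun_prop) (by fun_prop) ?_
      simpa [Real.sqrt_sq hr.le] using hr.ne'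
    refine fderiv_fderiv_apply_eq_of_hasDerivAt_line hv (fun s => ?_)
      (by simpa [Real.sqrt_sq hr.le] using hasDerivAt_sub_smul_of_continuousAt hk)
    simpa only [hrad (_ + _), norm_smul_single_zero_add_smul_single r _ hi, sub_zero, smul_eq_mul]
      using hasDerivAt_comp_sqrt_sq_add_sq hg' hr.ne' s
  rw [lap3, Fin.sum_univ_three, hradial, htangential 1 (by decide), htangential 2 (by decide)]
  ring

/-- The radial form of `-Δv + Ψ(|x|) v = μ v₊³` on `ℝ³ \ {0}`. -/
structure IsRadialSolution (Ψ : ℝ → ℝ) (μ : ℝ) (g : ℝ → ℝ) : Prop where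
  contDiff : ContDiff ℝ 2 g
  ode : ∀ r, 0 < r →
    deriv (deriv g) r + 2 / r * deriv g r = Ψ r * g r - μ * max (g r) 0 ^ 3

namespace IsRadialSolution

variable {Ψ : ℝ → ℝ} {μ : ℝ} {g : ℝ → ℝ}

lemma continuous (hg : IsRadialSolution Ψ μ g) : Continuous g :=
  hg.contDiff.continuous

lemma hasDerivAt (hg : IsRadialSolution Ψ μ g) (t : ℝ) : HasDerivAt g (deriv g t) t :=
  (hg.contDiff.differentiable two_ne_zero t).hasDerivAt

lemma hasDerivAt_deriv (hg : IsRadialSolution Ψ μ g) (t : ℝ) :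
    HasDerivAt (deriv g) (deriv (deriv g) t) t :=
  (hg.contDiff.differentiable_deriv_two t).hasDerivAt

lemma exists_abs_deriv_deriv_le (hg : IsRadialSolution Ψ μ g) (hΨ : Continuous Ψ) {a : ℝ}
    (ha : 0 < a) (b : ℝ) :
    ∃ K, 0 ≤ K ∧ ∀ t ∈ Icc a b, |deriv (deriv g) t| ≤ K * (|g t| + |deriv g t|) := by
  obtain ⟨M, hM⟩ := (isCompact_Icc (a := a) (b := b)).exists_bound_of_continuousOn
    hg.continuous.continuousOn
  obtain ⟨B, hB⟩ := (isCompact_Icc (a := a) (b := b)).exists_bound_of_continuousOn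
    hΨ.continuousOn
  refine ⟨2 / a + |B| + |μ| * M ^ 2, by positivity, fun t ht => ?_⟩
  have ht0 : 0 < t := ha.trans_le ht.1
  have hgM : |g t| ≤ M := by simpa using hM t ht
  have hΨB : |Ψ t| ≤ |B| := (by simpa using hB t ht : |Ψ t| ≤ B).trans (le_abs_self B)
  have hcube : |μ * max (g t) 0 ^ 3| ≤ |μ| * M ^ 2 * |g t| := by
    have hmax : |max (g t) 0| ≤ |g t| := by
      rw [abs_of_nonneg (le_max_right _ _)]; exact max_le (le_abs_self _) (abs_nonneg _)
    rw [abs_mul, abs_pow, mul_assoc]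
    gcongr
    calc |max (g t) 0| ^ 3 ≤ |g t| ^ 3 := by gcongr
      _ ≤ M ^ 2 * |g t| := by rw [pow_succ]; gcongr
  have h2t : |2 / t * deriv g t| ≤ 2 / a * |deriv g t| := by
    rw [abs_mul, abs_of_pos (by positivity : 0 < 2 / t)]
    gcongr
    exact ht.1
  calc |deriv (deriv g) t|
      = |Ψ t * g t - μ * max (g t) 0 ^ 3 - 2 / t * deriv g t| := by
        rw [← hg.ode t ht0, add_sub_cancel_right]
    _ ≤ |Ψ t| * |g t| + |μ * max (g t) 0 ^ 3| + |2 / t * deriv g t| := by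
        rw [← abs_mul]; exact (abs_sub _ _).trans (by gcongr; exact abs_sub _ _)
    _ ≤ |B| * |g t| + |μ| * M ^ 2 * |g t| + 2 / a * |deriv g t| := by gcongr
    _ ≤ (2 / a + |B| + |μ| * M ^ 2) * (|g t| + |deriv g t|) := by
        have hg0 : 0 ≤ |g t| := abs_nonneg _
        have hg'0 : 0 ≤ |deriv g t| := abs_nonneg _
        nlinarith [mul_nonneg (by positivity : 0 ≤ 2 / a) hg0, mul_nonneg (abs_nonneg B) hg'0,
          mul_nonneg (by positivity : 0 ≤ |μ| * M ^ 2) hg'0]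

theorem eq_zero_of_double_zero (hg : IsRadialSolution Ψ μ g) (hΨ : Continuous Ψ) {r₀ : ℝ}
    (hr₀ : 0 < r₀) (h₀ : g r₀ = 0) (h₀' : deriv g r₀ = 0) : EqOn g 0 (Ici 0) := by
  have hpos : EqOn g 0 (Ioi 0) := fun t ht => by
    obtain ⟨K, hK, hbound⟩ := hg.exists_abs_deriv_deriv_le hΨ (lt_min ht hr₀) (max t r₀)
    exact eq_zero_of_abs_deriv2_le hK (fun s _ => hg.hasDerivAt s)
      (fun s _ => hg.hasDerivAt_deriv s) hbound ⟨min_le_right _ _, le_max_right _ _⟩ h₀ h₀' t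
      ⟨min_le_left _ _, le_max_left _ _⟩
  simpa [closure_Ioi] using hpos.closure hg.continuous continuous_const

lemma false_of_neg_between_zeros (hg : IsRadialSolution Ψ μ g) (hΨ : ∀ r, 0 ≤ Ψ r) {p q : ℝ}
    (hp : 0 < p) (hpq : p < q) (hgp : g p = 0) (hgq : g q = 0)
    (hneg : ∀ t ∈ Ioo p q, g t < 0) : False := by
  set y : ℝ → ℝ := fun r => r * g r
  have hy : ∀ t, HasDerivAt y (g t + t * deriv g t) t := fun t =>
    ((hasDerivAt_id t).fun_mul (hg.hasDerivAt t)).congr_deriv (by simp)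
  have hy' : ∀ t, HasDerivAt (deriv y) (2 * deriv g t + t * deriv (deriv g) t) t := fun t => by
    rw [show deriv y = fun t => g t + t * deriv g t from funext fun t => (hy t).deriv]
    exact ((hg.hasDerivAt t).fun_add
      ((hasDerivAt_id t).fun_mul (hg.hasDerivAt_deriv t))).congr_deriv (by simp; ring)
  -- `(r g)'' = r (g'' + 2 g' / r) = r Ψ g ≤ 0` where `g < 0`
  have hconcave : ConcaveOn ℝ (Icc p q) y := by
    refine concaveOn_of_deriv2_nonpos (convex_Icc p q)
      (fun t _ => (hy t).continuousAt.continuousWithinAt)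
      (fun t _ => (hy t).differentiableAt.differentiableWithinAt)
      (fun t _ => (hy' t).differentiableAt.differentiableWithinAt) fun t ht => ?_
    rw [interior_Icc] at ht
    have ht0 : 0 < t := hp.trans ht.1
    have hode := hg.ode t ht0
    rw [max_eq_right (hneg t ht).le] at hode
    rw [Function.iterate_succ_apply, Function.iterate_one, (hy' t).deriv]
    have : 2 * deriv g t + t * deriv (deriv g) t = t * Ψ t * g t := by
      rw [← sub_eq_zero, show t * Ψ t * g t = t * (deriv (deriv g) t + 2 / t * deriv g t) by
        rw [hode]; ring]
      field_simp
      ring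
    rw [this]
    exact mul_nonpos_of_nonneg_of_nonpos (mul_nonneg ht0.le (hΨ t)) (hneg t ht).le
  obtain ⟨t, ht⟩ := nonempty_Ioo.2 hpq
  have := hconcave.min_le_of_mem_Icc (left_mem_Icc.2 hpq.le) (right_mem_Icc.2 hpq.le)
    (Ioo_subset_Icc_self ht)
  simp only [y, hgp, hgq, mul_zero, min_self] at this
  nlinarith [hneg t ht, hp.trans ht.1]

lemma ne_zero_of_lt_of_deriv_neg (hg : IsRadialSolution Ψ μ g) (hΨ : ∀ r, 0 ≤ Ψ r) {z t : ℝ}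
    (hz : 0 < z) (hgz : g z = 0) (hg'z : deriv g z < 0) (hzt : z < t) : g t ≠ 0 := by
  intro hgt
  have hneg : ∀ᶠ s in 𝓝[>] z, g s < 0 := by
    filter_upwards [nhdsWithin_le_nhds (eventually_nhdsWithin_sign_eq_of_deriv_neg hg'z hgz),
      self_mem_nhdsWithin] with s hs hzs
    rwa [(sign_eq_neg_one_iff.2 (sub_neg.2 hzs)), sign_eq_neg_one_iff] at hs
  obtain ⟨q, hq, hgq, hq_neg⟩ := exists_first_zero_of_eventually_neg
    hg.continuous.continuousOn hzt hgt.ge hneg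
  exact hg.false_of_neg_between_zeros hΨ hz hq.1 hgz hgq hq_neg

lemma ne_zero_of_gt_of_deriv_pos (hg : IsRadialSolution Ψ μ g) (hΨ : ∀ r, 0 ≤ Ψ r) {z t : ℝ}
    (ht : 0 < t) (hgz : g z = 0) (hg'z : 0 < deriv g z) (htz : t < z) : g t ≠ 0 := by
  intro hgt
  have hneg : ∀ᶠ s in 𝓝[<] z, g s < 0 := by
    filter_upwards [nhdsWithin_le_nhds (eventually_nhdsWithin_sign_eq_of_deriv_pos hg'z hgz),
      self_mem_nhdsWithin] with s hs hsz
    rwa [(sign_eq_neg_one_iff.2 (sub_neg.2 hsz)), sign_eq_neg_one_iff] at hs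
  obtain ⟨p, hp, hgp, hp_neg⟩ := exists_last_zero_of_eventually_neg
    hg.continuous.continuousOn htz hgt.ge hneg
  exact hg.false_of_neg_between_zeros hΨ (ht.trans_le hp.1) hp.2 hgp hgz hp_neg

theorem finite_zeros (hg : IsRadialSolution Ψ μ g) (hΨ : ∀ r, 0 ≤ Ψ r)
    (hsimple : ∀ z, 0 < z → g z = 0 → deriv g z ≠ 0) : {r | 0 < r ∧ g r = 0}.Finite := by
  have hdec : {z | 0 < z ∧ g z = 0 ∧ deriv g z < 0}.Subsingleton := by
    intro z hz z' hz'
    by_contra hne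
    rcases lt_or_gt_of_ne hne with h | h
    · exact hg.ne_zero_of_lt_of_deriv_neg hΨ hz.1 hz.2.1 hz.2.2 h hz'.2.1
    · exact hg.ne_zero_of_lt_of_deriv_neg hΨ hz'.1 hz'.2.1 hz'.2.2 h hz.2.1
  have hinc : {z | 0 < z ∧ g z = 0 ∧ 0 < deriv g z}.Subsingleton := by
    intro z hz z' hz'
    by_contra hne
    rcases lt_or_gt_of_ne hne with h | h
    · exact hg.ne_zero_of_gt_of_deriv_pos hΨ hz.1 hz'.2.1 hz'.2.2 h hz.2.1
    · exact hg.ne_zero_of_gt_of_deriv_pos hΨ hz'.1 hz.2.1 hz.2.2 h hz'.2.1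
  refine (hdec.finite.union hinc.finite).subset fun r ⟨hr, hgr⟩ => ?_
  rcases (hsimple r hr hgr).lt_or_gt with h | h
  · exact Or.inl ⟨hr, hgr, h⟩
  · exact Or.inr ⟨hr, hgr, h⟩

end IsRadialSolution

lemma isRadialSolution_radialProfile {v ψ : E3 → ℝ} {β μ : ℝ} (hv : ContDiff ℝ 2 v)
    (hrad : ∀ y, v y = radialProfile v ‖y‖)
    (heq : ∀ x, -lap3 v x - β * ψ x ^ 2 * v x = μ * max (v x) 0 ^ 3) :
    IsRadialSolution (fun r => -β * ψ (r • EuclideanSpace.single 0 1) ^ 2) μ (radialProfile v) where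
  contDiff := hv.comp (contDiff_id.smul contDiff_const)
  ode r hr := by
    have := heq (r • EuclideanSpace.single 0 1)
    rw [lap3_smul_single_zero hv hrad hr] at this
    simp only [radialProfile] at this ⊢
    linarith

theorem statement_15_general (μ β : ℝ) (hβ : β < 0)
    (ψ : E3 → ℝ) (hψC1 : ContDiff ℝ 1 ψ)
    (v : E3 → ℝ) (hvC2 : ContDiff ℝ 2 v) (hvne : v ≠ 0)
    (heq : ∀ x, - lap3 v x - β * (ψ x) ^ 2 * v x = μ * (max (v x) 0) ^ 3) :
    ∀ w : ℝ → ℝ, (∀ x, v x = w ‖x‖) → {r : ℝ | 0 < r ∧ w r = 0}.Finite := by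
  intro w hw
  have hprofile : ∀ r, 0 ≤ r → radialProfile v r = w r := fun r hr => by
    simp [radialProfile, hw, norm_smul, abs_of_nonneg hr]
  have hrad : ∀ y, v y = radialProfile v ‖y‖ := fun y => by rw [hprofile _ (norm_nonneg y), hw]
  have hsol := isRadialSolution_radialProfile hvC2 hrad heq
  have hsimple : ∀ z, 0 < z → radialProfile v z = 0 → deriv (radialProfile v) z ≠ 0 :=
    fun z hz h₀ h₀' => hvne <| funext fun y => by
      rw [hrad y]
      exact hsol.eq_zero_of_double_zero (by have := hψC1.continuous; fun_prop) hz h₀ h₀'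
        (norm_nonneg y)
  have hzeros : {r | 0 < r ∧ w r = 0} = {r | 0 < r ∧ radialProfile v r = 0} := by
    ext r
    exact and_congr_right fun hr => by rw [hprofile r hr.le]
  exact hzeros ▸ hsol.finite_zeros (fun _ => mul_nonneg (neg_nonneg.2 hβ.le) (sq_nonneg _)) hsimple

/-- in the case `λ = 0`, the radial profile of a nonzero solution has
finitely many zeros in `(0,∞)`. -/
theorem statement_15 (μ β : ℝ) (hμ : 0 < μ) (hβ : β < 0)
    (ψ : E3 → ℝ) (hψmem : memH1r ψ) (hψC1 : ContDiff ℝ 1 ψ)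
    (hψdecay : Tendsto (fun x : E3 => ‖x‖ * ψ x) (cocompact E3) (𝓝 0))
    (v : E3 → ℝ) (hvmem : memH1r v) (hvC2 : ContDiff ℝ 2 v) (hvne : v ≠ 0)
    (heq : ∀ x, - lap3 v x - β * (ψ x) ^ 2 * v x = μ * (max (v x) 0) ^ 3) :
    ∀ w : ℝ → ℝ, (∀ x, v x = w ‖x‖) → {r : ℝ | 0 < r ∧ w r = 0}.Finite :=
  statement_15_general μ β hβ ψ hψC1 v hvC2 hvne heq
end
end
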